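/- For every i ≥ 1, ker d_i ⊆ im d_{i+1}; that is, the complex ⋯ → kC^2⊗_{Λ_0}Λ →(d_2) kC^1⊗_{Λ_0}Λ →(d_1) kC^0⊗_{Λ_0}Λ is exact at kC^i⊗_{Λ_0}Λ for every i ≥ 1. -/

import Mathlib

set_option maxRecDepth 16000
set_option linter.unusedSectionVars false
set_option maxHeartbeats 1000000

open Finsupp

variable (k : Type) [Field k] (X : Type) [PartialOrder X] [Fintype X] [DecidableEq X]

/-- Ambient type in which the `i`-cycles live: `Amb 0 = X`,
`Amb (i+1) = (Amb i →₀ k) × X`. -/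
def Amb : ℕ → Type
  | 0 => X
  | i + 1 => ((Amb i) →₀ k) × X

/-- The "vertex" (second coordinate) of an element of `Amb i`. -/
def vtx : ∀ i : ℕ, Amb k X i → X
  | 0, a => a
  | _ + 1, p => p.2

/-- The ambient boundary map `∂_{i+1} : k C^{i+1} → k C^i`, defined on the whole
free module `Amb (i+1) →₀ k` by `(w, z) ↦ w`. -/
noncomputable def bd (i : ℕ) : (Amb k X (i + 1) →₀ k) →ₗ[k] (Amb k X i →₀ k) :=
  Finsupp.linearCombination k (fun p : Amb k X (i + 1) => p.1)

/-- `(ker ∂_{i+1})_z`: the subspace of elements of `ker ∂_{i+1}`, supported on `C^{i+1}`,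
all of whose support elements have second coordinate `< z`. -/
noncomputable def Kz (C : ∀ i : ℕ, Set (Amb k X i)) (i : ℕ) (z : X) :
    Submodule k (Amb k X (i + 1) →₀ k) :=
  LinearMap.ker (bd k X i) ⊓ Finsupp.supported k k (C (i + 1)) ⊓
    Finsupp.supported k k {p : Amb k X (i + 1) | vtx k X (i + 1) p < z}

/-- `(ker ∂_{i+1})_{z^-} = Σ_{z' ⋖ z} (ker ∂_{i+1})_{z'}`. -/
noncomputable def Kpred (C : ∀ i : ℕ, Set (Amb k X i)) (i : ℕ) (z : X) :
    Submodule k (Amb k X (i + 1) →₀ k) :=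
  ⨆ z' ∈ {z' : X | z' ⋖ z}, Kz k X C i z'

/-- `B^{i+2}_z'`: the set of `w` with `(w, z) ∈ C^{i+2}`. -/
def Bset (C : ∀ i : ℕ, Set (Amb k X i)) (i : ℕ) (z : X) : Set (Amb k X (i + 1) →₀ k) :=
  {w | (⟨w, z⟩ : Amb k X (i + 2)) ∈ C (i + 2)}

/-- The data of an admissible choice of `i`-cycles `C^i` for the poset `X` at the point `x`:
`C^0 = {x}`, `C^1 = {(x,y) : y ∈ x⁺}` and, recursively, for each `z` the set
`B^{i+2}_z' = {w | (w,z) ∈ C^{i+2}}` is a basis of a complement of `(ker ∂_{i+1})_{z⁻}`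
inside `(ker ∂_{i+1})_z`. -/
structure CycleData (x : X) : Type 1 where
  C : ∀ i : ℕ, Set (Amb k X i)
  hC0 : C 0 = {x}
  hC1 : C 1 = {p : Amb k X 1 | ∃ y : X, x ⋖ y ∧ p = ⟨Finsupp.single x 1, y⟩}
  indep : ∀ (i : ℕ) (z : X),
    LinearIndependent k (Subtype.val : Bset k X C i z → (Amb k X (i + 1) →₀ k))
  disj : ∀ (i : ℕ) (z : X),
    Submodule.span k (Bset k X C i z) ⊓ Kpred k X C i z = ⊥
  compl : ∀ (i : ℕ) (z : X),
    Submodule.span k (Bset k X C i z) ⊔ Kpred k X C i z = Kz k X C i z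

variable [DecidableRel (α := X) (· ≤ ·)]

instance : DecidableRel (α := X) (· < ·) := fun a b =>
  decidable_of_iff (a ≤ b ∧ ¬ b ≤ a) lt_iff_le_not_ge.symm

instance : LocallyFiniteOrder X := Fintype.toLocallyFiniteOrder

/-- The incidence algebra `Λ = kQ/I` of the poset `X`: functions on the pairs `a ≤ b`,
`c_{a,b}` corresponding to the characteristic function of `(a,b)`. -/
abbrev Lam := IncidenceAlgebra k X

/-- `Λ₀`, the (commutative, semisimple) subalgebra of `Λ` spanned by the stationary paths
`c_a`, identified with `k^X`. -/
abbrev Lam0 := X → k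

/-- The path `c_{a,b}` for `a ≤ b` (and junk value `0` if `a ≰ b`). -/
def cpath (a b : X) : Lam k X :=
  ⟨fun a' b' => if a' = a ∧ b' = b ∧ a ≤ b then 1 else 0, by
    intro a' b' h
    simp only [ite_eq_right_iff, one_ne_zero]
    rintro ⟨rfl, rfl, hab⟩
    exact (h hab).elim⟩

/-- The stationary path `c_a = c_{a,a}`. -/
def statp (a : X) : Lam k X := cpath k X a a

/-- The embedding of `Λ₀ = k^X` into `Λ` as the span of the stationary paths. -/
def diagHom : Lam0 k X →+* Lam k X where
  toFun f := ⟨fun a b => if a = b then f a else 0, by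
    intro a b h
    simp only [ite_eq_right_iff]
    rintro rfl
    exact (h le_rfl).elim⟩
  map_one' := by
    ext a b _
    simp [IncidenceAlgebra.one_apply]
  map_mul' f g := by
    ext a b hab
    rcases eq_or_ne a b with rfl | hne
    · simp [IncidenceAlgebra.mul_apply]
    · simp only [IncidenceAlgebra.coe_mk, IncidenceAlgebra.mul_apply, if_neg hne]
      rw [Finset.sum_eq_zero]
      intro x hx
      rcases eq_or_ne a x with rfl | hax
      · rw [if_neg hne]; ring
      · rw [if_neg hax]; ring
  map_zero' := by ext a b _; simp
  map_add' f g := by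
    ext a b hab
    rcases eq_or_ne a b with rfl | hne
    · simp [IncidenceAlgebra.add_apply]
    · simp [IncidenceAlgebra.add_apply, if_neg hne]

/-- `Λ` is a `Λ₀`-module via left multiplication through `diagHom`. -/
noncomputable instance : Module (Lam0 k X) (Lam k X) := Module.compHom _ (diagHom k X)

/-- The endomorphism of the free module `Amb i →₀ k` given by `f ∈ Λ₀ = k^X`, where `c_a`
acts on a basis element `p` by `δ_{vtx p, a}`. -/
noncomputable def phiAmbFun (i : ℕ) (f : Lam0 k X) :
    (Amb k X i →₀ k) →ₗ[k] (Amb k X i →₀ k) :=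
  Finsupp.lsum k fun p => f (vtx k X i p) • Finsupp.lsingle p

theorem phiAmbFun_single (i : ℕ) (f : Lam0 k X) (p : Amb k X i) (c : k) :
    phiAmbFun k X i f (Finsupp.single p c) = f (vtx k X i p) • Finsupp.single p c := by
  rw [phiAmbFun, Finsupp.lsum_single, LinearMap.smul_apply, Finsupp.lsingle_apply]

/-- The action of `Λ₀` on the free module `Amb i →₀ k` as a ring homomorphism to
endomorphisms. -/
noncomputable def phiAmb (i : ℕ) : Lam0 k X →+* Module.End k (Amb k X i →₀ k) where
  toFun f := phiAmbFun k X i f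
  map_one' := by
    apply Finsupp.lhom_ext
    intro p c
    rw [phiAmbFun_single, Module.End.one_apply, Pi.one_apply, one_smul]
  map_mul' f g := by
    apply Finsupp.lhom_ext
    intro p c
    show phiAmbFun k X i (f * g) (Finsupp.single p c) =
      (phiAmbFun k X i f * phiAmbFun k X i g) (Finsupp.single p c)
    rw [Module.End.mul_apply, phiAmbFun_single, phiAmbFun_single, map_smul,
      phiAmbFun_single, smul_smul, Pi.mul_apply, mul_comm]
  map_zero' := by
    apply Finsupp.lhom_ext
    intro p c
    rw [phiAmbFun_single, Pi.zero_apply, zero_smul, LinearMap.zero_apply]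
  map_add' f g := by
    apply Finsupp.lhom_ext
    intro p c
    rw [phiAmbFun_single, LinearMap.add_apply, phiAmbFun_single, phiAmbFun_single,
      Pi.add_apply, add_smul]

theorem phiAmb_apply (i : ℕ) (f : Lam0 k X) (g : Amb k X i →₀ k) (q : Amb k X i) :
    phiAmb k X i f g q = f (vtx k X i q) * g q := by
  induction g using Finsupp.induction_linear with
  | zero => simp
  | add a b ha hb => simp [ha, hb, mul_add]
  | single p c =>
    show phiAmbFun k X i f (Finsupp.single p c) q = _
    rw [phiAmbFun_single]
    rcases eq_or_ne p q with rfl | hpq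
    · simp [Finsupp.single_apply]
    · classical
      rw [Finsupp.smul_apply, Finsupp.single_apply, if_neg hpq, smul_zero, mul_zero]

theorem phiAmb_mem_supported (i : ℕ) (f : Lam0 k X) (s : Set (Amb k X i))
    (g : Amb k X i →₀ k) (hg : g ∈ Finsupp.supported k k s) :
    phiAmb k X i f g ∈ Finsupp.supported k k s := by
  rw [Finsupp.mem_supported'] at hg ⊢
  intro p hp
  rw [phiAmb_apply, hg p hp, mul_zero]

/-- The action of `Λ₀` on `kC^i` (the span of the `i`-cycles). -/
noncomputable def phiKC (C : ∀ i : ℕ, Set (Amb k X i)) (i : ℕ) :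
    Lam0 k X →+* Module.End k ↥(Finsupp.supported k k (C i)) where
  toFun f := (phiAmb k X i f).restrict
    (fun g hg => phiAmb_mem_supported k X i f (C i) g hg)
  map_one' := by
    apply LinearMap.ext
    rintro ⟨g, hg⟩
    apply Subtype.ext
    simp [LinearMap.restrict_apply]
  map_mul' f g := by
    apply LinearMap.ext
    rintro ⟨h, hh⟩
    apply Subtype.ext
    simp [LinearMap.restrict_apply]
  map_zero' := by
    apply LinearMap.ext
    rintro ⟨g, hg⟩
    apply Subtype.ext
    simp [LinearMap.restrict_apply]
  map_add' f g := by
    apply LinearMap.ext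
    rintro ⟨h, hh⟩
    apply Subtype.ext
    simp [LinearMap.restrict_apply]

/-- `kC^i` as a `Λ₀`-module. -/
noncomputable instance (C : ∀ i : ℕ, Set (Amb k X i)) (i : ℕ) :
    Module (Lam0 k X) ↥(Finsupp.supported k k (C i)) :=
  Module.compHom _ (phiKC k X C i)

open scoped TensorProduct

/-- Right multiplication by `a ∈ Λ` as a `Λ₀`-linear endomorphism of `Λ`. -/
noncomputable def rmulL (a : Lam k X) : Lam k X →ₗ[Lam0 k X] Lam k X where
  toFun b := b * a
  map_add' b c := add_mul b c a
  map_smul' f b := by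
    show (diagHom k X f * b) * a = diagHom k X f * (b * a)
    rw [mul_assoc]

/-- The right `Λ`-module structure (i.e. left `Λᵐᵒᵖ`-module structure) on `M ⊗_{Λ₀} Λ`,
`Λ` being a `Λ₀`-`Λ`-bimodule via right multiplication. -/
noncomputable instance modOpTensor (M : Type) [AddCommGroup M] [Module (Lam0 k X) M] :
    Module (Lam k X)ᵐᵒᵖ (M ⊗[Lam0 k X] Lam k X) where
  smul a t := LinearMap.lTensor M (rmulL k X a.unop) t
  one_smul t := by
    show LinearMap.lTensor M (rmulL k X (1 : (Lam k X)ᵐᵒᵖ).unop) t = t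
    have : rmulL k X ((1 : (Lam k X)ᵐᵒᵖ).unop) = LinearMap.id := by
      apply LinearMap.ext; intro b
      show b * 1 = b
      rw [mul_one]
    rw [this, LinearMap.lTensor_id, LinearMap.id_apply]
  mul_smul a b t := by
    show LinearMap.lTensor M (rmulL k X (a * b).unop) t =
      LinearMap.lTensor M (rmulL k X a.unop) (LinearMap.lTensor M (rmulL k X b.unop) t)
    have : rmulL k X ((a * b).unop) = (rmulL k X a.unop).comp (rmulL k X b.unop) := by
      apply LinearMap.ext; intro c
      show c * (b.unop * a.unop) = (c * b.unop) * a.unop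
      rw [mul_assoc]
    rw [this, LinearMap.lTensor_comp, LinearMap.comp_apply]
  smul_zero a := map_zero _
  smul_add a s t := map_add _ s t
  add_smul a b t := by
    show LinearMap.lTensor M (rmulL k X (a + b).unop) t =
      LinearMap.lTensor M (rmulL k X a.unop) t + LinearMap.lTensor M (rmulL k X b.unop) t
    have : rmulL k X ((a + b).unop) = rmulL k X a.unop + rmulL k X b.unop := by
      apply LinearMap.ext; intro c
      show c * (a.unop + b.unop) = c * a.unop + c * b.unop
      rw [mul_add]
    rw [this, LinearMap.lTensor_add, LinearMap.add_apply]
  zero_smul t := by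
    show LinearMap.lTensor M (rmulL k X (0 : (Lam k X)ᵐᵒᵖ).unop) t = 0
    have : rmulL k X ((0 : (Lam k X)ᵐᵒᵖ).unop) = 0 := by
      apply LinearMap.ext; intro c
      show c * 0 = 0
      rw [mul_zero]
    rw [this, LinearMap.lTensor_zero, LinearMap.zero_apply]

theorem opSmul_tmul (M : Type) [AddCommGroup M] [Module (Lam0 k X) M]
    (a : Lam k X) (m : M) (b : Lam k X) :
    (MulOpposite.op a) • (m ⊗ₜ[Lam0 k X] b) = m ⊗ₜ[Lam0 k X] (b * a) := rfl

/-- The sum `q_z = Σ_{u ≤ z} c_{u,z}` of the paths ending at `z`. -/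
noncomputable def qel (z : X) : Lam k X :=
  ∑ u ∈ Finset.univ.filter (· ≤ z), cpath k X u z

/-- `kC^i ⊗_{Λ₀} Λ`, the `i`-th term of the projective resolution, a right `Λ`-module. -/
noncomputable def TCmod (C : ∀ i : ℕ, Set (Amb k X i)) (i : ℕ) : Type :=
  ↥(Finsupp.supported k k (C i)) ⊗[Lam0 k X] Lam k X

noncomputable instance (C : ∀ i : ℕ, Set (Amb k X i)) (i : ℕ) : AddCommGroup (TCmod k X C i) :=
  TensorProduct.addCommGroup (R := Lam0 k X) (M := ↥(Finsupp.supported k k (C i))) (N := Lam k X)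

noncomputable instance (C : ∀ i : ℕ, Set (Amb k X i)) (i : ℕ) :
    Module (Lam k X)ᵐᵒᵖ (TCmod k X C i) :=
  modOpTensor k X ↥(Finsupp.supported k k (C i))

/-- The basis element of `kC^i` given by `p ∈ C^i`. -/
noncomputable def bas (C : ∀ i : ℕ, Set (Amb k X i)) (i : ℕ) (p : Amb k X i)
    (hp : p ∈ C i) : ↥(Finsupp.supported k k (C i)) :=
  ⟨Finsupp.single p 1, Finsupp.single_mem_supported k 1 hp⟩

/-- The generator `(w,z) ⊗ 1` of `kC^i ⊗_{Λ₀} Λ` given by `(w,z) ∈ C^i`. -/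
noncomputable def gen (C : ∀ i : ℕ, Set (Amb k X i)) (i : ℕ) (p : Amb k X i)
    (hp : p ∈ C i) : TCmod k X C i :=
  bas k X C i p hp ⊗ₜ[Lam0 k X] 1

/-- Evaluation of an element of `Λ` at the stationary pair `(z,z)`, a ring homomorphism. -/
noncomputable def evalHom (z : X) : Lam k X →+* k where
  toFun f := f z z
  map_one' := by simp
  map_mul' f g := by
    show (f * g) z z = f z z * g z z
    rw [IncidenceAlgebra.mul_apply, Finset.Icc_self, Finset.sum_singleton]
  map_zero' := rfl
  map_add' f g := rfl

/-- The simple right `Λ`-module `S_z` at the vertex `z`: a copy of `k` on which `λ ∈ Λ`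
acts by multiplication by `λ(z,z)`. -/
def SMod (_z : X) : Type := k

noncomputable instance (z : X) : AddCommGroup (SMod k X z) := inferInstanceAs (AddCommGroup k)
noncomputable instance (z : X) : Module k (SMod k X z) := inferInstanceAs (Module k k)
instance (z : X) : One (SMod k X z) := ⟨(1 : k)⟩

/-- The right `Λ`-module structure on `S_z`. -/
noncomputable instance (z : X) : Module (Lam k X)ᵐᵒᵖ (SMod k X z) :=
  Module.compHom k ((evalHom k X z).fromOpposite (fun a b => mul_comm _ _))

/-- The right `Λ₀`-module structure on `S_z` (the restriction of the `Λ`-action). -/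
noncomputable instance (z : X) : Module (Lam0 k X) (SMod k X z) :=
  Module.compHom k (Pi.evalRingHom (fun _ : X => k) z)

instance (z : X) : SMulCommClass (Lam k X)ᵐᵒᵖ k (SMod k X z) where
  smul_comm a c m := mul_left_comm (evalHom k X z (MulOpposite.unop a)) c m

instance (z : X) : SMulCommClass k (Lam k X)ᵐᵒᵖ (SMod k X z) where
  smul_comm c a m := (mul_left_comm (evalHom k X z (MulOpposite.unop a)) c m).symm

/-- The indecomposable projective right `Λ`-module `P_z = c_z Λ`. -/
noncomputable def PMod (z : X) : Submodule (Lam k X)ᵐᵒᵖ (Lam k X) :=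
  Submodule.span (Lam k X)ᵐᵒᵖ {statp k X z}

/-- The radical `M · J(Λ)` of a right `Λ`-module `M`, where `J(Λ)` is the Jacobson radical. -/
noncomputable def radMod (M : Type) [AddCommGroup M] [Module (Lam k X)ᵐᵒᵖ M] :
    Submodule (Lam k X)ᵐᵒᵖ M :=
  Submodule.span (Lam k X)ᵐᵒᵖ
    {m | ∃ a ∈ Ideal.jacobson (⊥ : Ideal (Lam k X)ᵐᵒᵖ), ∃ n : M, m = a • n}

/-- `|B^i_b|`: the number of `i`-cycles with second coordinate `b`. -/
noncomputable def Bcard (C : ∀ i : ℕ, Set (Amb k X i)) (i : ℕ) (b : X) : ℕ :=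
  Set.ncard {p : Amb k X i | p ∈ C i ∧ vtx k X i p = b}

/-- The predicate singling out the differentials `d_{i+1} : kC^{i+1} ⊗_{Λ₀} Λ → kC^i ⊗_{Λ₀} Λ`
of the resolution: `d ((w,z) ⊗ 1) = w ⊗ q_z` for `(w,z) ∈ C^{i+1}`. (These properties determine
the maps `d` uniquely.) -/
def IsDiff {x : X} (D : CycleData k X x)
    (d : ∀ i : ℕ, TCmod k X D.C (i + 1) →ₗ[(Lam k X)ᵐᵒᵖ] TCmod k X D.C i) : Prop :=
  ∀ (i : ℕ) (p : Amb k X (i + 1)) (hp : p ∈ D.C (i + 1))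
    (w : ↥(Finsupp.supported k k (D.C i))) (_hw : (w : Amb k X i →₀ k) = p.1),
    d i (gen k X D.C (i + 1) p hp) = w ⊗ₜ[Lam0 k X] qel k X (vtx k X (i + 1) p)

/-! ### Auxiliary lemmas -/

section Aux

open scoped Classical

lemma cpath_apply (a b a' b' : X) :
    cpath k X a b a' b' = if a' = a ∧ b' = b ∧ a ≤ b then 1 else 0 := rfl

lemma diagHom_apply (f : Lam0 k X) (a b : X) :
    diagHom k X f a b = if a = b then f a else 0 := rfl

/-- Evaluation at a pair as an additive map. -/
noncomputable def evalAdd (a b : X) : Lam k X →+ k :=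
  { toFun := fun f => f a b, map_zero' := rfl, map_add' := fun _ _ => rfl }

lemma sum_apply' {ι : Type*} (s : Finset ι) (f : ι → Lam k X) (a b : X) :
    (∑ i ∈ s, f i) a b = ∑ i ∈ s, f i a b :=
  map_sum (evalAdd k X a b) f s

lemma qel_apply (z a b : X) :
    qel k X z a b = if b = z ∧ a ≤ z then 1 else 0 := by
  rw [qel, sum_apply']
  rw [Finset.sum_eq_single a]
  · rw [cpath_apply]
    by_cases h : b = z ∧ a ≤ z
    · rw [if_pos h, if_pos ⟨rfl, h.1, h.2⟩]
    · rw [if_neg h, if_neg]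
      rintro ⟨-, h1, h2⟩
      exact h ⟨h1, h2⟩
  · intro u _ hu
    rw [cpath_apply, if_neg]
    rintro ⟨h1, -, -⟩
    exact hu h1.symm
  · intro ha
    rw [cpath_apply, if_neg]
    rintro ⟨-, h1, h2⟩
    exact ha (by simpa using h2)

lemma diag_mul_apply (f : Lam0 k X) (lam : Lam k X) (a b : X) :
    (diagHom k X f * lam) a b = f a * lam a b := by
  by_cases hab : a ≤ b
  · rw [IncidenceAlgebra.mul_apply, Finset.sum_eq_single a]
    · rw [diagHom_apply, if_pos rfl]
    · intro u _ hu
      rw [diagHom_apply, if_neg (Ne.symm hu), zero_mul]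
    · intro ha
      exact absurd (Finset.mem_Icc.2 ⟨le_rfl, hab⟩) ha
  · rw [IncidenceAlgebra.apply_eq_zero_of_not_le hab,
      IncidenceAlgebra.apply_eq_zero_of_not_le hab, mul_zero]

lemma qel_mul_apply (z : X) (lam : Lam k X) (a b : X) :
    (qel k X z * lam) a b = if a ≤ z then lam z b else 0 := by
  by_cases hab : a ≤ b
  · rw [IncidenceAlgebra.mul_apply]
    by_cases hz : z ∈ Finset.Icc a b
    · rw [Finset.sum_eq_single z]
      · rw [qel_apply, if_pos ⟨rfl, (Finset.mem_Icc.1 hz).1⟩, one_mul,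
          if_pos (Finset.mem_Icc.1 hz).1]
      · intro u _ hu
        rw [qel_apply, if_neg (fun h => hu h.1), zero_mul]
      · exact fun h => absurd hz h
    · rw [Finset.sum_eq_zero, eq_comm]
      · rw [ite_eq_right_iff]
        intro haz
        apply IncidenceAlgebra.apply_eq_zero_of_not_le
        intro hzb
        exact hz (Finset.mem_Icc.2 ⟨haz, hzb⟩)
      · intro u hu
        rw [qel_apply, if_neg, zero_mul]
        rintro ⟨rfl, -⟩
        exact hz hu
  · rw [IncidenceAlgebra.apply_eq_zero_of_not_le hab, eq_comm, ite_eq_right_iff]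
    intro haz
    apply IncidenceAlgebra.apply_eq_zero_of_not_le
    intro hzb
    exact hab (haz.trans hzb)


lemma l0_smul_lam (f : Lam0 k X) (lam : Lam k X) :
    f • lam = diagHom k X f * lam := rfl

variable {C : ∀ i : ℕ, Set (Amb k X i)}

lemma l0_smul_supported (j : ℕ) (f : Lam0 k X)
    (m : ↥(Finsupp.supported k k (C j))) :
    ((f • m : ↥(Finsupp.supported k k (C j))) : Amb k X j →₀ k) = phiAmb k X j f ↑m := rfl

/-- `basE C j p` is `single p 1` when `p ∈ C j`, junk `0` otherwise. -/
noncomputable def basE (C : ∀ i : ℕ, Set (Amb k X i)) (j : ℕ) (p : Amb k X j) :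
    ↥(Finsupp.supported k k (C j)) :=
  if h : p ∈ C j then bas k X C j p h else 0

lemma basE_coe (j : ℕ) (p : Amb k X j) (hp : p ∈ C j) :
    (basE k X C j p : Amb k X j →₀ k) = Finsupp.single p 1 := by
  rw [basE, dif_pos hp]; rfl

lemma supported_eq_sum (j : ℕ) (m : ↥(Finsupp.supported k k (C j))) :
    m = ∑ q ∈ (↑m : Amb k X j →₀ k).support.attach,
      (Pi.single (vtx k X j ↑q) ((↑m : Amb k X j →₀ k) ↑q) : Lam0 k X) • basE k X C j ↑q := by
  apply Subtype.ext
  rw [AddSubmonoidClass.coe_finset_sum]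
  have : ∀ q ∈ (↑m : Amb k X j →₀ k).support.attach,
      (((Pi.single (vtx k X j ↑q) ((↑m : Amb k X j →₀ k) ↑q) : Lam0 k X) • basE k X C j ↑q
        : ↥(Finsupp.supported k k (C j))) : Amb k X j →₀ k)
      = Finsupp.single (↑q : Amb k X j) ((↑m : Amb k X j →₀ k) ↑q) := by
    rintro ⟨q, hq⟩ -
    have hqC : q ∈ C j := (Finsupp.mem_supported k (↑m : Amb k X j →₀ k)).1 m.2 hq
    rw [l0_smul_supported, basE_coe k X j q hqC]
    show phiAmbFun k X j _ _ = _
    rw [phiAmbFun_single, Pi.single_eq_same, Finsupp.smul_single, smul_eq_mul, mul_one]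
  rw [Finset.sum_congr rfl this, Finset.sum_attach _ (fun q => Finsupp.single q ((↑m : Amb k X j →₀ k) q))]
  exact (Finsupp.sum_single (↑m : Amb k X j →₀ k)).symm

lemma tmul_eq_sum (j : ℕ) (m : ↥(Finsupp.supported k k (C j))) (mu : Lam k X) :
    (m ⊗ₜ[Lam0 k X] mu : TCmod k X C j) =
      ∑ q ∈ (↑m : Amb k X j →₀ k).support.attach,
        basE k X C j ↑q ⊗ₜ[Lam0 k X]
          (diagHom k X (Pi.single (vtx k X j ↑q) ((↑m : Amb k X j →₀ k) ↑q)) * mu) := by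
  conv_lhs => rw [supported_eq_sum k X j m]
  rw [TensorProduct.sum_tmul]
  exact Finset.sum_congr rfl fun q _ => by rw [TensorProduct.smul_tmul, l0_smul_lam]

lemma opSmul_gen (j : ℕ) (p : Amb k X j) (hp : p ∈ C j) (lam : Lam k X) :
    (MulOpposite.op lam) • gen k X C j p hp = bas k X C j p hp ⊗ₜ[Lam0 k X] lam := by
  show bas k X C j p hp ⊗ₜ[Lam0 k X] (1 * lam) = _
  rw [one_mul]

lemma TCmod_induction (j : ℕ) (P : TCmod k X C j → Prop)
    (h0 : P 0) (hadd : ∀ s t, P s → P t → P (s + t))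
    (hgen : ∀ (p : Amb k X j) (hp : p ∈ C j) (lam : Lam k X),
      P ((MulOpposite.op lam) • gen k X C j p hp)) :
    ∀ t, P t := by
  intro t
  refine TensorProduct.induction_on (motive := fun s : TCmod k X C j => P s) t h0 (fun m mu => ?_) (fun s t hs ht => hadd s t hs ht)
  rw [tmul_eq_sum]
  refine Finset.sum_induction _ P hadd h0 ?_
  rintro ⟨q, hq⟩ -
  have hqC : q ∈ C j := (Finsupp.mem_supported k (↑m : Amb k X j →₀ k)).1 m.2 hq
  have hb : basE k X C j q = bas k X C j q hqC := by rw [basE, dif_pos hqC]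
  rw [hb, ← opSmul_gen]
  exact hgen q hqC _


lemma mem_Kz_iff (i : ℕ) (z : X) (w : Amb k X (i + 1) →₀ k) :
    w ∈ Kz k X C i z ↔ bd k X i w = 0 ∧ w ∈ Finsupp.supported k k (C (i + 1)) ∧
      ∀ q ∈ w.support, vtx k X (i + 1) q < z := by
  rw [Kz, Submodule.mem_inf, Submodule.mem_inf, LinearMap.mem_ker, and_assoc]
  refine and_congr_right fun _ => and_congr_right fun _ => ?_
  rw [Finsupp.mem_supported]
  constructor
  · intro h q hq
    exact h hq
  · intro h q hq
    exact h q hq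

lemma Bset_subset_Kz {x : X} (D : CycleData k X x) (i : ℕ) (z : X) :
    Bset k X D.C i z ⊆ (Kz k X D.C i z : Set _) := fun v hv =>
  (D.compl i z ▸ (le_sup_left : Submodule.span k (Bset k X D.C i z) ≤ _) :
    Submodule.span k (Bset k X D.C i z) ≤ Kz k X D.C i z) (Submodule.subset_span hv)

lemma cycle_supp {x : X} (D : CycleData k X x) (j : ℕ) (p : Amb k X (j + 1))
    (hp : p ∈ D.C (j + 1)) :
    (p.1 : Amb k X j →₀ k) ∈ Finsupp.supported k k (D.C j) ∧
      ∀ q ∈ (p.1 : Amb k X j →₀ k).support, vtx k X j q < vtx k X (j + 1) p := by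
  cases j with
  | zero =>
    rw [D.hC1] at hp
    obtain ⟨y, hy, rfl⟩ := hp
    constructor
    · rw [Finsupp.mem_supported, D.hC0]
      intro q hq
      have : q = x := Finset.mem_singleton.1 (Finsupp.support_single_subset hq)
      rw [this]
      rfl
    · intro q hq
      have : q = x := Finset.mem_singleton.1 (Finsupp.support_single_subset hq)
      subst this
      exact hy.lt
  | succ i =>
    have hb : (p.1 : Amb k X (i + 1) →₀ k) ∈ Bset k X D.C i p.2 := hp
    have hk := Bset_subset_Kz k X D i p.2 hb
    rw [SetLike.mem_coe, mem_Kz_iff] at hk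
    exact ⟨hk.2.1, hk.2.2⟩

/-- The `u`-component extractor, raw version. -/
noncomputable def piF (j : ℕ) (g : Amb k X j → k) (m : Amb k X j →₀ k) : Amb k X j →₀ k :=
  m.sum fun p c => Finsupp.single p (g p * c)

lemma piF_apply (j : ℕ) (g : Amb k X j → k) (m : Amb k X j →₀ k) (q : Amb k X j) :
    piF k X j g m q = g q * m q := by
  classical
  rw [piF, Finsupp.sum_apply, Finsupp.sum, Finset.sum_eq_single q]
  · rw [Finsupp.single_eq_same]
  · intro p _ hpq
    exact Finsupp.single_eq_of_ne' hpq
  · intro hq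
    rw [Finsupp.notMem_support_iff.1 hq, mul_zero, Finsupp.single_zero, Finsupp.coe_zero,
      Pi.zero_apply]

/-- The `u`-component extractor `kC^j ⊗ Λ →+ k C^j`, `m ⊗ λ ↦ Σ_p λ(vtx p, u) m_p p`. -/
noncomputable def piT (C : ∀ i : ℕ, Set (Amb k X i)) (j : ℕ) (u : X) :
    TCmod k X C j →+ (Amb k X j →₀ k) :=
  TensorProduct.liftAddHom
    (AddMonoidHom.mk'
      (fun (m : ↥(Finsupp.supported k k (C j))) => AddMonoidHom.mk'
        (fun (mu : Lam k X) => piF k X j (fun p => mu (vtx k X j p) u) ↑m)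
        (fun mu nu => Finsupp.ext fun q => by
          rw [Finsupp.add_apply, piF_apply, piF_apply, piF_apply,
            IncidenceAlgebra.add_apply, add_mul]))
      (fun m n => AddMonoidHom.ext fun mu => Finsupp.ext fun q => by
        show piF k X j _ ((m + n : ↥(Finsupp.supported k k (C j))) : Amb k X j →₀ k) q
          = (piF k X j _ ↑m + piF k X j _ ↑n) q
        rw [Finsupp.add_apply, piF_apply, piF_apply, piF_apply, Submodule.coe_add,
          Finsupp.add_apply, mul_add]))
    (fun f m mu => by
      ext q
      show piF k X j _ ((f • m : ↥(Finsupp.supported k k (C j))) : Amb k X j →₀ k) q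
        = piF k X j (fun p => (f • mu : Lam k X) (vtx k X j p) u) ↑m q
      rw [piF_apply, piF_apply, l0_smul_supported, phiAmb_apply, l0_smul_lam, diag_mul_apply]
      ring)

lemma piT_tmul (j : ℕ) (u : X) (m : ↥(Finsupp.supported k k (C j))) (mu : Lam k X) :
    piT k X C j u (m ⊗ₜ[Lam0 k X] mu) = piF k X j (fun p => mu (vtx k X j p) u) ↑m :=
  TensorProduct.liftAddHom_tmul _ _ _ _

lemma piT_opSmul_gen (j : ℕ) (u : X) (p : Amb k X j) (hp : p ∈ C j) (lam : Lam k X) :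
    piT k X C j u ((MulOpposite.op lam) • gen k X C j p hp) =
      Finsupp.single p (lam (vtx k X j p) u) := by
  rw [opSmul_gen, piT_tmul]
  ext q
  rw [piF_apply]
  show _ * (Finsupp.single p (1 : k)) q = _
  rcases eq_or_ne q p with rfl | hqp
  · rw [Finsupp.single_eq_same, Finsupp.single_eq_same, mul_one]
  · rw [Finsupp.single_eq_of_ne' (Ne.symm hqp), Finsupp.single_eq_of_ne' (Ne.symm hqp), mul_zero]

lemma piT_mem (j : ℕ) (u : X) (t : TCmod k X C j) :
    piT k X C j u t ∈ Finsupp.supported k k (C j) ⊓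
      Finsupp.supported k k {p : Amb k X j | vtx k X j p ≤ u} := by
  refine TCmod_induction k X j (fun s => piT k X C j u s ∈ Finsupp.supported k k (C j) ⊓
      Finsupp.supported k k {p : Amb k X j | vtx k X j p ≤ u}) ?_ ?_ ?_ t
  · rw [map_zero]; exact Submodule.zero_mem _
  · intro s t hs ht
    rw [map_add]; exact Submodule.add_mem _ hs ht
  · intro p hp lam
    rw [piT_opSmul_gen]
    rcases eq_or_ne (lam (vtx k X j p) u) 0 with h0 | h0
    · rw [h0, Finsupp.single_zero]; exact Submodule.zero_mem _
    · exact Submodule.mem_inf.2 ⟨Finsupp.single_mem_supported k _ hp,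
        Finsupp.single_mem_supported k _ (IncidenceAlgebra.le_of_ne_zero h0)⟩

lemma piT_d {x : X} (D : CycleData k X x)
    (d : ∀ i : ℕ, TCmod k X D.C (i + 1) →ₗ[(Lam k X)ᵐᵒᵖ] TCmod k X D.C i)
    (hd : IsDiff k X D d) (j : ℕ) (u : X) (t : TCmod k X D.C (j + 1)) :
    piT k X D.C j u (d j t) = bd k X j (piT k X D.C (j + 1) u t) := by
  refine TCmod_induction k X (j + 1)
    (fun s => piT k X D.C j u (d j s) = bd k X j (piT k X D.C (j + 1) u s)) ?_ ?_ ?_ t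
  · rw [map_zero, map_zero, map_zero, map_zero]
  · intro s t hs ht
    rw [map_add, map_add, map_add, map_add, hs, ht]
  · intro p hp lam
    have hs := cycle_supp k X D j p hp
    set z := vtx k X (j + 1) p with hz
    have hdg : d j (gen k X D.C (j + 1) p hp) = (⟨p.1, hs.1⟩ :
        ↥(Finsupp.supported k k (D.C j))) ⊗ₜ[Lam0 k X] qel k X z :=
      hd j p hp _ rfl
    rw [map_smul, hdg]
    have : @HSMul.hSMul _ (TCmod k X D.C j) _ _ (MulOpposite.op lam) ((⟨p.1, hs.1⟩ : ↥(Finsupp.supported k k (D.C j)))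
        ⊗ₜ[Lam0 k X] qel k X z) = (⟨p.1, hs.1⟩ : ↥(Finsupp.supported k k (D.C j)))
        ⊗ₜ[Lam0 k X] (qel k X z * lam) := rfl
    rw [this, piT_tmul, piT_opSmul_gen]
    have hbd : bd k X j (Finsupp.single p (lam z u)) = lam z u • p.1 :=
      Finsupp.linearCombination_single _ _ _
    rw [hbd]
    ext q
    rw [piF_apply, Finsupp.smul_apply, smul_eq_mul, qel_mul_apply]
    by_cases hq : q ∈ (p.1 : Amb k X j →₀ k).support
    · rw [if_pos (hs.2 q hq).le]
    · rw [Finsupp.notMem_support_iff.1 hq, mul_zero, mul_zero]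


lemma mul_constSmul_one (c : k) (mu : Lam k X) : mu * (c • (1 : Lam k X)) = c • mu := by
  ext a b hab
  rw [IncidenceAlgebra.mul_apply, IncidenceAlgebra.constSMul_apply, Finset.sum_eq_single b]
  · rw [IncidenceAlgebra.constSMul_apply, IncidenceAlgebra.one_apply, if_pos rfl, smul_eq_mul,
      smul_eq_mul, mul_one, mul_comm]
  · intro u _ hu
    rw [IncidenceAlgebra.constSMul_apply, IncidenceAlgebra.one_apply, if_neg hu, smul_zero,
      mul_zero]
  · intro hb
    exact absurd (Finset.mem_Icc.2 ⟨hab, le_rfl⟩) hb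

/-- The reassembly map `k C^j → kC^j ⊗ Λ`, `w ↦ Σ_p w_p · (p ⊗ c_{vtx p, u})`. -/
noncomputable def sig (C : ∀ i : ℕ, Set (Amb k X i)) (j : ℕ) (u : X) (w : Amb k X j →₀ k) :
    TCmod k X C j :=
  w.sum fun p c => basE k X C j p ⊗ₜ[Lam0 k X] (c • cpath k X (vtx k X j p) u)

lemma sig_zero (j : ℕ) (u : X) : sig k X C j u 0 = 0 :=
  Finsupp.sum_zero_index

lemma sig_single (j : ℕ) (u : X) (p : Amb k X j) (c : k) :
    sig k X C j u (Finsupp.single p c) =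
      basE k X C j p ⊗ₜ[Lam0 k X] (c • cpath k X (vtx k X j p) u) :=
  Finsupp.sum_single_index (by rw [zero_smul, TensorProduct.tmul_zero]; rfl)

lemma sig_add (j : ℕ) (u : X) (w w' : Amb k X j →₀ k) :
    sig k X C j u (w + w') = sig k X C j u w + sig k X C j u w' :=
  Finsupp.sum_add_index' (fun p => by rw [zero_smul, TensorProduct.tmul_zero]; rfl)
    (fun p b₁ b₂ => by rw [add_smul, TensorProduct.tmul_add]; rfl)

lemma sig_smul (j : ℕ) (u : X) (c : k) (w : Amb k X j →₀ k) :
    sig k X C j u (c • w) = (MulOpposite.op (c • (1 : Lam k X))) • sig k X C j u w := by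
  rw [sig]; refine (Finsupp.sum_smul_index (fun p => by rw [zero_smul, TensorProduct.tmul_zero]; rfl)).trans ?_
  rw [sig]; unfold Finsupp.sum; refine Eq.trans ?_ (Finset.smul_sum ..).symm
  refine Finset.sum_congr rfl fun p _ => ?_
  refine Eq.trans ?_ (opSmul_tmul k X _ (c • (1 : Lam k X)) (basE k X C j p)
    (w p • cpath k X (vtx k X j p) u)).symm
  show basE k X C j p ⊗ₜ[Lam0 k X] ((c * w p) • cpath k X (vtx k X j p) u) = _
  rw [mul_constSmul_one, mul_comm c, mul_smul, smul_comm]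

lemma Kz_mono (i : ℕ) {z z' : X} (h : z ≤ z') : Kz k X C i z ≤ Kz k X C i z' := by
  intro w hw
  rw [mem_Kz_iff] at hw ⊢
  exact ⟨hw.1, hw.2.1, fun q hq => lt_of_lt_of_le (hw.2.2 q hq) h⟩

lemma Kz_le_biSup {x : X} (D : CycleData k X x) (i : ℕ) (u : X) :
    Kz k X D.C i u ≤ ⨆ z ∈ Set.Iic u, Submodule.span k (Bset k X D.C i z) := by
  induction u using WellFoundedLT.induction with
  | _ u IH =>
    rw [← D.compl i u]
    apply sup_le
    · exact le_iSup₂_of_le u (Set.mem_Iic.2 le_rfl) le_rfl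
    · rw [Kpred]
      refine iSup₂_le fun z' hz' => ?_
      exact (IH z' hz'.lt).trans
        (iSup₂_le fun z hz => le_iSup₂_of_le z (le_trans hz hz'.lt.le) le_rfl)


lemma Kz_le_Kpred (i : ℕ) {z' u : X} (h : z' ⋖ u) :
    Kz k X C i z' ≤ Kpred k X C i u := by
  rw [Kpred]
  exact le_iSup₂_of_le z' h le_rfl

lemma ker_le_Kz {x : X} (D : CycleData k X x) (j : ℕ) (u : X) (w : Amb k X (j + 1) →₀ k)
    (hker : bd k X j w = 0) (hsupp : w ∈ Finsupp.supported k k (D.C (j + 1)))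
    (hle : ∀ q ∈ w.support, vtx k X (j + 1) q ≤ u) :
    w ∈ Kz k X D.C j u := by
  classical
  rw [mem_Kz_iff]
  refine ⟨hker, hsupp, ?_⟩
  suffices key : ∀ q ∈ w.support, vtx k X (j + 1) q ≠ u by
    intro q hq
    exact (hle q hq).lt_of_ne (key q hq)
  have hmemC : ∀ q ∈ w.support, q ∈ D.C (j + 1) := fun q hq =>
    (Finsupp.mem_supported k w).1 hsupp hq
  cases j with
  | zero =>
    intro q hq hqu
    have hC := hmemC q hq
    rw [D.hC1] at hC
    obtain ⟨y, hy, rfl⟩ := hC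
    have hyu : y = u := hqu
    subst hyu
    have hsub : w.support ⊆ {(⟨Finsupp.single x 1, y⟩ : Amb k X 1)} := by
      intro q' hq'
      have hC' := hmemC q' hq'
      rw [D.hC1] at hC'
      obtain ⟨y', hy', rfl⟩ := hC'
      have hy'y : y' = y := by
        by_contra hne
        exact hy.2 hy'.lt ((hle _ hq').lt_of_ne hne)
      subst hy'y; exact Finset.mem_singleton_self _
    have hw : w = Finsupp.single (⟨Finsupp.single x 1, y⟩ : Amb k X 1)
        (w ⟨Finsupp.single x 1, y⟩) := Finsupp.support_subset_singleton.1 hsub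
    have hker2 : bd k X 0 (Finsupp.single (⟨Finsupp.single x 1, y⟩ : Amb k X 1)
        (w ⟨Finsupp.single x 1, y⟩)) = 0 := by rw [hw] at hker; exact hker
    rw [bd] at hker2; erw [Finsupp.linearCombination_single] at hker2
    rcases smul_eq_zero.1 hker2 with h | h
    · exact Finsupp.mem_support_iff.1 hq h
    · exact one_ne_zero (Finsupp.single_eq_zero.1 h)
  | succ i =>
    set w1 := w.filter (fun p => vtx k X (i + 2) p = u) with hw1def
    set w0 := w.filter (fun p => ¬ vtx k X (i + 2) p = u) with hw0def
    have hsplit : w1 + w0 = w := Finsupp.filter_pos_add_filter_neg w _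
    have hsupp1 : ∀ q ∈ w1.support, q ∈ w.support ∧ vtx k X (i + 2) q = u := by
      intro q hq
      rw [hw1def, Finsupp.support_filter, Finset.mem_filter] at hq
      exact hq
    have hsupp0 : ∀ q ∈ w0.support, q ∈ w.support ∧ ¬ vtx k X (i + 2) q = u := by
      intro q hq
      rw [hw0def, Finsupp.support_filter, Finset.mem_filter] at hq
      exact hq
    have h0 : bd k X (i + 1) w0 ∈ Kpred k X D.C i u := by
      rw [bd, Finsupp.linearCombination_apply]
      refine Submodule.sum_mem _ fun p hp => ?_
      obtain ⟨hpw, hpu⟩ := hsupp0 p hp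
      have hlt : vtx k X (i + 2) p < u := (hle p hpw).lt_of_ne hpu
      obtain ⟨z', hz'1, hz'2⟩ := exists_le_covBy_of_lt hlt
      refine Submodule.smul_mem _ _ (Kz_le_Kpred k X i hz'2 (Kz_mono k X i hz'1 ?_))
      exact Bset_subset_Kz k X D i (vtx k X (i + 2) p) (hmemC p hpw)
    have h1 : bd k X (i + 1) w1 ∈ Submodule.span k (Bset k X D.C i u) := by
      rw [bd, Finsupp.linearCombination_apply]
      refine Submodule.sum_mem _ fun p hp => ?_
      obtain ⟨hpw, hpu⟩ := hsupp1 p hp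
      refine Submodule.smul_mem _ _ (Submodule.subset_span ?_)
      exact (show (⟨p.1, u⟩ : Amb k X (i + 2)) = p from Prod.ext rfl hpu.symm) ▸ hmemC p hpw
    have haddz : bd k X (i + 1) w1 + bd k X (i + 1) w0 = 0 := by
      rw [← map_add, hsplit, hker]
    have hbdw1 : bd k X (i + 1) w1 = 0 := by
      have hmem2 : bd k X (i + 1) w1 ∈ Submodule.span k (Bset k X D.C i u) ⊓
          Kpred k X D.C i u := by
        refine ⟨h1, ?_⟩
        rw [eq_neg_of_add_eq_zero_left haddz]
        exact Submodule.neg_mem _ h0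
      rw [D.disj i u] at hmem2
      exact (Submodule.mem_bot k).1 hmem2
    have hW1 : w1 = 0 := by
      have hind := D.indep i u
      have hbij : Set.BijOn (fun v : ↥(Bset k X D.C i u) => (⟨↑v, u⟩ : Amb k X (i + 2)))
          ((fun v : ↥(Bset k X D.C i u) => (⟨↑v, u⟩ : Amb k X (i + 2))) ⁻¹'
            (↑w1.support : Set (Amb k X (i + 2))))
          (↑w1.support : Set (Amb k X (i + 2))) := by
        refine ⟨fun v hv => hv, fun v1 _ v2 _ hv => Subtype.ext (congrArg Prod.fst hv),
          fun q hq => ?_⟩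
        obtain ⟨hqw, hqu⟩ := hsupp1 q hq
        have hq1 : q.1 ∈ Bset k X D.C i u :=
          (show (⟨q.1, u⟩ : Amb k X (i + 2)) = q from Prod.ext rfl hqu.symm) ▸ hmemC q hqw
        refine ⟨⟨q.1, hq1⟩, ?_, Prod.ext rfl hqu.symm⟩
        show (⟨q.1, u⟩ : Amb k X (i + 2)) ∈ (↑w1.support : Set (Amb k X (i + 2)))
        rw [show (⟨q.1, u⟩ : Amb k X (i + 2)) = q from Prod.ext rfl hqu.symm]
        exact hq
      have hlc : Finsupp.linearCombination k (Subtype.val : ↥(Bset k X D.C i u) → _)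
          (Finsupp.comapDomain _ w1 hbij.injOn) = bd k X (i + 1) w1 := by
        rw [Finsupp.linearCombination_apply, bd, Finsupp.linearCombination_apply]
        exact Finsupp.sum_comapDomain _ w1 (fun q c => c • q.1) hbij
      have hl0 : Finsupp.comapDomain _ w1 hbij.injOn = 0 :=
        linearIndependent_iff.1 hind _ (by rw [hlc, hbdw1])
      exact Finsupp.eq_zero_of_comapDomain_eq_zero _ w1 hbij hl0
    intro q hq hqu
    have heq : w1 q = w q := Finsupp.filter_apply_pos _ w hqu
    rw [hW1] at heq
    exact Finsupp.mem_support_iff.1 hq heq.symm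


lemma diag_qel_cpath (a : X) (c : k) (z u : X) (haz : a < z) (hzu : z ≤ u) :
    diagHom k X (Pi.single a c) * (qel k X z * cpath k X z u) = c • cpath k X a u := by
  ext alpha beta h
  rw [diag_mul_apply, qel_mul_apply, IncidenceAlgebra.constSMul_apply, smul_eq_mul,
    cpath_apply, cpath_apply, Pi.single_apply]
  by_cases ha : alpha = a
  · rw [if_pos ha, if_pos (ha.le.trans haz.le)]
    by_cases hb : beta = u
    · rw [if_pos ⟨rfl, hb, hzu⟩, if_pos ⟨ha, hb, haz.le.trans hzu⟩]
    · rw [if_neg (fun h => hb h.2.1), if_neg (fun h => hb h.2.1)]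
  · rw [if_neg ha, zero_mul, if_neg (fun h => ha h.1), mul_zero]

lemma sig_eq_attach (j : ℕ) (u : X) (w : Amb k X j →₀ k) :
    sig k X C j u w = ∑ q ∈ w.support.attach,
      basE k X C j ↑q ⊗ₜ[Lam0 k X] (w ↑q • cpath k X (vtx k X j ↑q) u) := by
  rw [sig]
  exact (Finset.sum_attach _ _).symm

lemma sig_mem_range {x : X} (D : CycleData k X x)
    (d : ∀ i : ℕ, TCmod k X D.C (i + 1) →ₗ[(Lam k X)ᵐᵒᵖ] TCmod k X D.C i)
    (hd : IsDiff k X D d) (i : ℕ) (u : X) (w : Amb k X (i + 1) →₀ k)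
    (hw : w ∈ ⨆ z ∈ Set.Iic u, Submodule.span k (Bset k X D.C i z)) :
    sig k X D.C (i + 1) u w ∈ LinearMap.range (d (i + 1)) := by
  refine Submodule.iSup_induction _
    (motive := fun w => sig k X D.C (i + 1) u w ∈ LinearMap.range (d (i + 1))) hw ?_ ?_ ?_
  · intro z v hv
    by_cases hz : z ∈ Set.Iic u
    · rw [iSup_pos hz] at hv
      induction hv using Submodule.span_induction with
      | mem v hvB =>
        have hvK := Bset_subset_Kz k X D i z hvB
        rw [SetLike.mem_coe, mem_Kz_iff] at hvK
        have hvC : (⟨v, z⟩ : Amb k X (i + 2)) ∈ D.C (i + 2) := hvB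
        refine ⟨(MulOpposite.op (cpath k X z u)) • gen k X D.C (i + 2) ⟨v, z⟩ hvC, ?_⟩
        rw [map_smul, hd (i + 1) ⟨v, z⟩ hvC ⟨v, hvK.2.1⟩ rfl]
        refine (opSmul_tmul k X _ _ _ _).trans ?_
        rw [tmul_eq_sum, sig_eq_attach]
        refine Finset.sum_congr rfl fun q hq => ?_
        congr 1
        exact diag_qel_cpath k X (vtx k X (i + 1) ↑q) (v ↑q) z u (hvK.2.2 ↑q q.2) hz
      | zero => rw [sig_zero]; exact Submodule.zero_mem _
      | add a b _ _ ha hb => rw [sig_add]; exact Submodule.add_mem _ ha hb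
      | smul c a _ ha => rw [sig_smul]; exact Submodule.smul_mem _ _ ha
    · rw [iSup_neg hz] at hv
      rw [(Submodule.mem_bot k).1 hv, sig_zero]
      exact Submodule.zero_mem _
  · rw [sig_zero]; exact Submodule.zero_mem _
  · intro a b ha hb
    rw [sig_add]; exact Submodule.add_mem _ ha hb

lemma sum_smul_cpath (z : X) (lam : Lam k X) :
    ∑ u ∈ Finset.univ, lam z u • cpath k X z u = diagHom k X (Pi.single z (1 : k)) * lam := by
  ext a b hab
  rw [sum_apply', diag_mul_apply, Pi.single_apply, Finset.sum_eq_single b]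
  · rw [IncidenceAlgebra.constSMul_apply, smul_eq_mul, cpath_apply]
    by_cases haz : a = z
    · rw [if_pos ⟨haz, rfl, haz ▸ hab⟩, mul_one, if_pos haz, one_mul, haz]
    · rw [if_neg (fun h => haz h.1), mul_zero, if_neg haz, zero_mul]
  · intro u _ hub
    rw [IncidenceAlgebra.constSMul_apply, cpath_apply, if_neg (fun h => hub h.2.1.symm),
      smul_zero]
  · intro hb
    exact absurd (Finset.mem_univ b) hb

lemma pi_single_smul_bas (j : ℕ) (p : Amb k X j) (hp : p ∈ C j) :
    (Pi.single (vtx k X j p) (1 : k) : Lam0 k X) • bas k X C j p hp = bas k X C j p hp := by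
  apply Subtype.ext
  rw [l0_smul_supported]
  show phiAmbFun k X j _ _ = _
  rw [show ((bas k X C j p hp : ↥(Finsupp.supported k k (C j))) : Amb k X j →₀ k)
    = Finsupp.single p 1 from rfl, phiAmbFun_single, Pi.single_eq_same, one_smul]

lemma decomp (j : ℕ) (t : TCmod k X C j) :
    t = ∑ u ∈ Finset.univ, sig k X C j u (piT k X C j u t) := by
  refine TCmod_induction k X j
    (fun t => t = ∑ u ∈ Finset.univ, sig k X C j u (piT k X C j u t)) ?_ ?_ ?_ t
  · exact (Finset.sum_eq_zero fun u _ => by rw [map_zero, sig_zero]).symm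
  · intro s t hs ht
    conv_lhs => rw [hs, ht]
    rw [← Finset.sum_add_distrib]
    refine Finset.sum_congr rfl fun u _ => ?_
    rw [map_add, sig_add]
  · intro p hp lam
    have hterm : ∀ u : X, sig k X C j u (piT k X C j u ((MulOpposite.op lam) • gen k X C j p hp))
        = bas k X C j p hp ⊗ₜ[Lam0 k X]
          (lam (vtx k X j p) u • cpath k X (vtx k X j p) u) := by
      intro u
      have hb : basE k X C j p = bas k X C j p hp := by rw [basE, dif_pos hp]
      rw [piT_opSmul_gen, sig_single, hb]
    rw [Finset.sum_congr rfl (fun u _ => hterm u)]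
    have key : (bas k X C j p hp ⊗ₜ[Lam0 k X] lam : ↥(Finsupp.supported k k (C j)) ⊗[Lam0 k X] Lam k X)
        = ∑ u, bas k X C j p hp ⊗ₜ[Lam0 k X] (lam (vtx k X j p) u • cpath k X (vtx k X j p) u) := by
      rw [← TensorProduct.tmul_sum,
        sum_smul_cpath, ← l0_smul_lam, ← TensorProduct.smul_tmul, pi_single_smul_bas]
    exact (opSmul_gen k X j p hp lam).trans key

end Aux
/-- `ker d_i ⊆ im d_{i+1}` for every `i ≥ 1`: the complex
`⋯ → kC^2⊗Λ → kC^1⊗Λ → kC^0⊗Λ` is exact at `kC^i ⊗ Λ` for every `i ≥ 1`. -/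
theorem stmt5 (x : X) (D : CycleData k X x)
    (d : ∀ i : ℕ, TCmod k X D.C (i + 1) →ₗ[(Lam k X)ᵐᵒᵖ] TCmod k X D.C i)
    (hd : IsDiff k X D d) (i : ℕ) :
    LinearMap.ker (d i) ≤ LinearMap.range (d (i + 1)) := by
  intro t ht
  rw [LinearMap.mem_ker] at ht
  rw [decomp k X (i + 1) t]
  refine Submodule.sum_mem _ fun u _ => ?_
  have hmem := piT_mem k X (i + 1) u t
  rw [Submodule.mem_inf] at hmem
  have hker : bd k X i (piT k X D.C (i + 1) u t) = 0 := by
    rw [← piT_d k X D d hd i u t, ht, map_zero]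
  have hle : ∀ q ∈ (piT k X D.C (i + 1) u t).support, vtx k X (i + 1) q ≤ u := fun q hq =>
    (Finsupp.mem_supported k _).1 hmem.2 hq
  have hKz := ker_le_Kz k X D i u _ hker hmem.1 hle
  exact sig_mem_range k X D d hd i u _ (Kz_le_biSup k X D i u hKz)
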